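/- arXiv:1401.4560 — 2 statements merged into one kernel-verified Lean document; each statement's English description precedes it below -/
import Mathlib

section
/- For every integer n ≥ 1, the q-Bernoulli numbers satisfy the q-binomial recurrence Σ_{k=0}^{n} [n choose k]_q · ((−1;q)_{n−k}/2^{n−k}) · b_{k,q} − b_{n,q} = 1 if n = 1, and = 0 if n > 1. -/
open Finset PowerSeries

/-- The `q`-number `[n]_q = (1 - q^n)/(1 - q)`. -/
noncomputable def qNum (q : ℂ) (n : ℕ) : ℂ := (1 - q ^ n) / (1 - q)

/-- The `q`-factorial `[n]_q!`. -/
noncomputable def qFact (q : ℂ) : ℕ → ℂ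
  | 0 => 1
  | n + 1 => qNum q (n + 1) * qFact q n

/-- The `q`-shifted factorial `(a; q)_n = ∏_{j=0}^{n-1} (1 - q^j a)`. -/
noncomputable def qShift (a q : ℂ) (n : ℕ) : ℂ := ∏ j ∈ Finset.range n, (1 - q ^ j * a)

/-- The Gaussian binomial coefficient `[n choose k]_q = (q;q)_n / ((q;q)_{n-k} (q;q)_k)`. -/
noncomputable def qBinom (q : ℂ) (n k : ℕ) : ℂ :=
  qShift q q n / (qShift q q (n - k) * qShift q q k)

/-- The formal power series (in `t`) `𝓔_q(tx) = Σ_{n≥0} (-1;q)_n (x)^n t^n / (2^n [n]_q!)`. -/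
noncomputable def qExp (q x : ℂ) : PowerSeries ℂ :=
  PowerSeries.mk fun n => qShift (-1) q n * x ^ n / (2 ^ n * qFact q n)

/-- The generating series `Σ_{n≥0} a_n t^n / [n]_q!` of a sequence `a`. -/
noncomputable def qGen (q : ℂ) (a : ℕ → ℂ) : PowerSeries ℂ :=
  PowerSeries.mk fun n => a n / qFact q n

/-- The `q`-addition `(x ⊕_q y)^n`. -/
noncomputable def qAdd (q x y : ℂ) (n : ℕ) : ℂ :=
  ∑ k ∈ Finset.range (n + 1),
    qBinom q n k * (qShift (-1) q k * qShift (-1) q (n - k) / 2 ^ n) * x ^ k * y ^ (n - k)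

/-!
Multiplying the defining identity `(Σ b_k t^k/[k]_q!) · (𝓔_q(t) - 1) = t` out and comparing the
coefficients of `t^n`, scaled by `[n]_q!`, gives the recurrence: the Cauchy product of the two
series produces `[n]_q!/([k]_q! [n-k]_q!) = [n choose k]_q`, and `[1]_q! = 1`.
-/

section

variable {q : ℂ}

lemma pow_ne_one_of_norm_lt_one (hq : ‖q‖ < 1) {n : ℕ} (hn : n ≠ 0) : q ^ n ≠ 1 := by
  intro h
  have := pow_lt_one₀ (norm_nonneg q) hq hn
  rw [← norm_pow, h, norm_one] at this
  exact lt_irrefl 1 this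

lemma ne_one_of_norm_lt_one (hq : ‖q‖ < 1) : q ≠ 1 := by
  simpa using pow_ne_one_of_norm_lt_one hq one_ne_zero

lemma qNum_ne_zero (hq : ‖q‖ < 1) {n : ℕ} (hn : n ≠ 0) : qNum q n ≠ 0 :=
  div_ne_zero (sub_ne_zero.2 (pow_ne_one_of_norm_lt_one hq hn).symm)
    (sub_ne_zero.2 (ne_one_of_norm_lt_one hq).symm)

lemma qFact_ne_zero (hq : ‖q‖ < 1) : ∀ n, qFact q n ≠ 0
  | 0 => one_ne_zero
  | n + 1 => mul_ne_zero (qNum_ne_zero hq n.succ_ne_zero) (qFact_ne_zero hq n)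

lemma qFact_one (hq : q ≠ 1) : qFact q 1 = 1 := by
  simp [qFact, qNum, div_self (sub_ne_zero.2 hq.symm)]

lemma qShift_self_eq_qFact_mul (hq : q ≠ 1) (n : ℕ) :
    qShift q q n = qFact q n * (1 - q) ^ n := by
  induction n with
  | zero => simp [qShift, qFact]
  | succ n ih =>
    have h1q : (1 : ℂ) - q ≠ 0 := sub_ne_zero.2 hq.symm
    rw [qShift, prod_range_succ, ← qShift, ih, qFact, qNum]
    field_simp
    ring

lemma qBinom_eq_qFact_div (hq : q ≠ 1) {n k : ℕ} (hk : k ≤ n) :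
    qBinom q n k = qFact q n / (qFact q (n - k) * qFact q k) := by
  have hsplit : (1 - q) ^ n = (1 - q) ^ (n - k) * (1 - q) ^ k := by
    rw [← pow_add, Nat.sub_add_cancel hk]
  have hpow : (1 - q) ^ (n - k) * (1 - q) ^ k ≠ 0 := by
    rw [← hsplit]
    exact pow_ne_zero _ (sub_ne_zero.2 hq.symm)
  rw [qBinom, qShift_self_eq_qFact_mul hq, qShift_self_eq_qFact_mul hq,
    qShift_self_eq_qFact_mul hq, hsplit, mul_mul_mul_comm, mul_div_mul_right _ _ hpow]

lemma qFact_mul_coeff_qGen_mul_qExp (hq : q ≠ 1) (a : ℕ → ℂ) (x : ℂ) (n : ℕ) :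
    qFact q n * coeff n (qGen q a * qExp q x)
      = ∑ k ∈ range (n + 1), qBinom q n k * (qShift (-1) q (n - k) * x ^ (n - k) / 2 ^ (n - k))
          * a k := by
  rw [coeff_mul, Nat.sum_antidiagonal_eq_sum_range_succ_mk, mul_sum]
  refine sum_congr rfl fun k hk => ?_
  rw [qBinom_eq_qFact_div hq (mem_range_succ_iff.1 hk)]
  simp only [qGen, qExp, coeff_mk, div_eq_mul_inv, mul_inv]
  ring

lemma qFact_mul_coeff_qGen (hq : ‖q‖ < 1) (a : ℕ → ℂ) (n : ℕ) :
    qFact q n * coeff n (qGen q a) = a n := by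
  rw [qGen, coeff_mk, mul_div_cancel₀ _ (qFact_ne_zero hq n)]

end

theorem qBernoulli_recurrence_general (q : ℂ) (hq1 : ‖q‖ < 1)
    (b : ℕ → ℂ) (hb : qGen q b * (qExp q 1 - 1) = PowerSeries.X)
    (n : ℕ) :
    (∑ k ∈ Finset.range (n + 1),
        qBinom q n k * (qShift (-1) q (n - k) / 2 ^ (n - k)) * b k) - b n
      = if n = 1 then 1 else 0 := by
  have hq : q ≠ 1 := ne_one_of_norm_lt_one hq1
  have hcoeff := congrArg (fun f => qFact q n * coeff n f) hb
  simp only [mul_sub, mul_one, map_sub, qFact_mul_coeff_qGen_mul_qExp hq,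
    qFact_mul_coeff_qGen hq1, one_pow, coeff_X] at hcoeff
  rw [hcoeff]
  split_ifs with hn
  · rw [hn, qFact_one hq, mul_one]
  · rw [mul_zero]

/-- The `q`-binomial recurrence for the `q`-Bernoulli numbers `b_{n,q}`, which are defined by
`t/(𝓔_q(t)-1) = Σ_{n≥0} b_{n,q} t^n/[n]_q!`. -/
theorem qBernoulli_recurrence (q : ℂ) (hq0 : 0 < ‖q‖) (hq1 : ‖q‖ < 1)
    (b : ℕ → ℂ) (hb : qGen q b * (qExp q 1 - 1) = PowerSeries.X)
    (n : ℕ) (hn : 1 ≤ n) :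
    (∑ k ∈ Finset.range (n + 1),
        qBinom q n k * (qShift (-1) q (n - k) / 2 ^ (n - k)) * b k) - b n
      = if n = 1 then 1 else 0 :=
  qBernoulli_recurrence_general q hq1 b hb n
end

section
/- (Addition theorem for q-Bernoulli polynomials.) For all x, y ∈ ℂ and every integer n ≥ 0: B_{n,q}(x,y) = Σ_{k=0}^{n} [n choose k]_q b_{k,q} (x ⊕_q y)^{n−k}, and also B_{n,q}(x,y) = Σ_{k=0}^{n} [n choose k]_q ((−1;q)_{n−k}/2^{n−k}) B_{k,q}(x) y^{n−k}. -/
open Finset PowerSeries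

/-!
The series `𝓔_q(t) - 1` is nonzero (its product with the generating series of the `b_{n,q}`
is `t`), so it cancels in the domain `ℂ⟦t⟧` and both identities reduce to identities between
generating series:
`Σ B_{n,q}(x,y) tⁿ/[n]_q! = (Σ b_{n,q} tⁿ/[n]_q!) 𝓔_q(tx) 𝓔_q(ty)` and
`Σ B_{n,q}(x,y) tⁿ/[n]_q! = (Σ B_{n,q}(x) tⁿ/[n]_q!) 𝓔_q(ty)`. Products of series of the form
`Σ aₙ tⁿ/[n]_q!` are `q`-binomial convolutions, and `𝓔_q(tx) 𝓔_q(ty)` is the series of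
`(x ⊕_q y)ⁿ`; comparing coefficients gives both formulas.
-/

namespace QCalculus

variable {q : ℂ}

theorem not_isOfFinOrder_of_norm_lt_one (hq : ‖q‖ < 1) : ¬IsOfFinOrder q :=
  fun h => hq.ne h.norm_eq_one

theorem one_sub_mul_qNum (q : ℂ) (n : ℕ) : (1 - q) * qNum q n = 1 - q ^ n := by
  rcases eq_or_ne q 1 with rfl | hq
  · simp
  · exact mul_div_cancel₀ _ (sub_ne_zero.mpr hq.symm)

theorem qShift_self (q : ℂ) (n : ℕ) : qShift q q n = (1 - q) ^ n * qFact q n := by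
  induction n with
  | zero => simp [qShift, qFact]
  | succ n ih =>
    rw [qShift, prod_range_succ, ← qShift, ih, qFact]
    linear_combination (-(1 - q) ^ n * qFact q n) * one_sub_mul_qNum q (n + 1)

theorem qNum_ne_zero (hq : ¬IsOfFinOrder q) {n : ℕ} (hn : n ≠ 0) : qNum q n ≠ 0 := by
  refine right_ne_zero_of_mul (a := 1 - q) ?_
  rw [one_sub_mul_qNum, sub_ne_zero]
  exact fun h => hq (isOfFinOrder_iff_pow_eq_one.mpr ⟨n, Nat.pos_of_ne_zero hn, h.symm⟩)

theorem qFact_ne_zero (hq : ¬IsOfFinOrder q) (n : ℕ) : qFact q n ≠ 0 := by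
  induction n with
  | zero => exact one_ne_zero
  | succ n ih => exact mul_ne_zero (qNum_ne_zero hq n.succ_ne_zero) ih

theorem qBinom_eq_qFact_div (hq : ¬IsOfFinOrder q) {n k : ℕ} (hk : k ≤ n) :
    qBinom q n k = qFact q n / (qFact q k * qFact q (n - k)) := by
  have h1q : (1 : ℂ) - q ≠ 0 := sub_ne_zero.mpr fun h => hq (h ▸ IsOfFinOrder.one)
  obtain ⟨m, rfl⟩ := Nat.exists_eq_add_of_le hk
  rw [qBinom, qShift_self, qShift_self, qShift_self, Nat.add_sub_cancel_left, pow_add]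
  field_simp

theorem qGen_injective (hq : ¬IsOfFinOrder q) : Function.Injective (qGen q) :=
  fun a c h => funext fun n => by
    simpa [qGen, coeff_mk, div_left_inj' (qFact_ne_zero hq n)] using congrArg (coeff n) h

theorem qGen_mul_qGen (hq : ¬IsOfFinOrder q) (a c : ℕ → ℂ) :
    qGen q a * qGen q c =
      qGen q fun n => ∑ k ∈ range (n + 1), qBinom q n k * a k * c (n - k) := by
  ext n
  rw [coeff_mul, Nat.sum_antidiagonal_eq_sum_range_succ_mk, qGen, qGen, qGen, coeff_mk, sum_div]
  refine sum_congr rfl fun k hk => ?_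
  rw [coeff_mk, coeff_mk, qBinom_eq_qFact_div hq (Nat.lt_succ_iff.mp (mem_range.mp hk))]
  have := qFact_ne_zero hq n
  field_simp

theorem qExp_eq_qGen (q x : ℂ) : qExp q x = qGen q fun n => qShift (-1) q n * x ^ n / 2 ^ n := by
  ext n
  simp only [qExp, qGen, coeff_mk, div_div]

theorem qExp_zero (q : ℂ) : qExp q 0 = 1 := by
  ext (_ | n) <;> simp [qExp, qShift, qFact, coeff_one]

theorem qExp_mul_qExp (hq : ¬IsOfFinOrder q) (x y : ℂ) :
    qExp q x * qExp q y = qGen q (qAdd q x y) := by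
  rw [qExp_eq_qGen, qExp_eq_qGen, qGen_mul_qGen hq]
  congr 1
  funext n
  refine sum_congr rfl fun k hk => ?_
  rw [← Nat.add_sub_of_le (Nat.lt_succ_iff.mp (mem_range.mp hk))]
  simp only [Nat.add_sub_cancel_left, pow_add]
  field_simp

end QCalculus

open QCalculus in
theorem qBernoulli_addition_general (q : ℂ) (hq1 : ‖q‖ < 1)
    (b : ℕ → ℂ) (hb : qGen q b * (qExp q 1 - 1) = PowerSeries.X)
    (B : ℂ → ℂ → ℕ → ℂ)
    (hB : ∀ x y : ℂ, qGen q (B x y) * (qExp q 1 - 1) = PowerSeries.X * qExp q x * qExp q y)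
    (x y : ℂ) (n : ℕ) :
    B x y n = ∑ k ∈ Finset.range (n + 1), qBinom q n k * b k * qAdd q x y (n - k) ∧
    B x y n = ∑ k ∈ Finset.range (n + 1),
      qBinom q n k * (qShift (-1) q (n - k) / 2 ^ (n - k)) * B x 0 k * y ^ (n - k) := by
  have hq := not_isOfFinOrder_of_norm_lt_one hq1
  have hE : qExp q 1 - 1 ≠ 0 := right_ne_zero_of_mul (hb ▸ X_ne_zero)
  have hBb : qGen q (B x y) = qGen q b * (qExp q x * qExp q y) :=
    mul_right_cancel₀ hE (by rw [hB, ← hb]; ring)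
  have hBx : qGen q (B x y) = qGen q (B x 0) * qExp q y :=
    mul_right_cancel₀ hE (by rw [hB, mul_right_comm _ (qExp q y), hB, qExp_zero, mul_one])
  rw [qExp_mul_qExp hq, qGen_mul_qGen hq] at hBb
  rw [qExp_eq_qGen, qGen_mul_qGen hq] at hBx
  refine ⟨congrFun (qGen_injective hq hBb) n, ?_⟩
  rw [congrFun (qGen_injective hq hBx) n]
  refine sum_congr rfl fun k _ => ?_
  ring

/-- Addition theorem for the `q`-Bernoulli polynomials `B_{n,q}(x,y)`, defined by
`(t/(𝓔_q(t)-1)) 𝓔_q(tx) 𝓔_q(ty) = Σ_{n≥0} B_{n,q}(x,y) t^n/[n]_q!`, in terms of the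
`q`-Bernoulli numbers `b_{n,q}` defined by `t/(𝓔_q(t)-1) = Σ_{n≥0} b_{n,q} t^n/[n]_q!`. -/
theorem qBernoulli_addition (q : ℂ) (hq0 : 0 < ‖q‖) (hq1 : ‖q‖ < 1)
    (b : ℕ → ℂ) (hb : qGen q b * (qExp q 1 - 1) = PowerSeries.X)
    (B : ℂ → ℂ → ℕ → ℂ)
    (hB : ∀ x y : ℂ, qGen q (B x y) * (qExp q 1 - 1) = PowerSeries.X * qExp q x * qExp q y)
    (x y : ℂ) (n : ℕ) :
    B x y n = ∑ k ∈ Finset.range (n + 1), qBinom q n k * b k * qAdd q x y (n - k) ∧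
    B x y n = ∑ k ∈ Finset.range (n + 1),
      qBinom q n k * (qShift (-1) q (n - k) / 2 ^ (n - k)) * B x 0 k * y ^ (n - k) :=
  qBernoulli_addition_general q hq1 b hb B hB x y n
end
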